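/- arXiv:1710.11321 — 3 statements merged into one kernel-verified Lean document; each statement's English description precedes it below -/
import Mathlib

section
/- The map (a,b,c,d) ↦ (r1,r2,r3,r4) = (-3b+c, a+b-c+d, -a+b, a) is a bijection from the set S_ℓ = {(a,b,c,d) ∈ ℤ≥0⁴ : 3b ≤ c ≤ b+d, a ≤ b, -c+3d ≤ ℓ} onto the set T_ℓ = {(r1,r2,r3,r4) ∈ ℤ≥0⁴ : r4 ≤ r2, 2r1+3r2+3r3 ≤ ℓ}. -/
/-- The set `S_ℓ` of type `G₂⁽¹⁾`: quadruples `(a,b,c,d)` of nonnegative integers with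
`3b ≤ c ≤ b + d`, `a ≤ b`, `-c + 3d ≤ ℓ`. -/
def Sset (ℓ : ℤ) : Set (ℤ × ℤ × ℤ × ℤ) :=
  {p | 0 ≤ p.1 ∧ 0 ≤ p.2.1 ∧ 0 ≤ p.2.2.1 ∧ 0 ≤ p.2.2.2 ∧
    3 * p.2.1 ≤ p.2.2.1 ∧ p.2.2.1 ≤ p.2.1 + p.2.2.2 ∧ p.1 ≤ p.2.1 ∧
    -p.2.2.1 + 3 * p.2.2.2 ≤ ℓ}

/-- The set `T_ℓ` of type `G₂⁽¹⁾`: quadruples `(r₁,r₂,r₃,r₄)` of nonnegative integers with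
`r₄ ≤ r₂` and `2r₁ + 3r₂ + 3r₃ ≤ ℓ`. -/
def Tset (ℓ : ℤ) : Set (ℤ × ℤ × ℤ × ℤ) :=
  {r | 0 ≤ r.1 ∧ 0 ≤ r.2.1 ∧ 0 ≤ r.2.2.1 ∧ 0 ≤ r.2.2.2 ∧
    r.2.2.2 ≤ r.2.1 ∧ 2 * r.1 + 3 * r.2.1 + 3 * r.2.2.1 ≤ ℓ}

/-- The substitution `(a,b,c,d) ↦ (-3b+c, a+b-c+d, -a+b, a)` is a bijection from `S_ℓ`
onto `T_ℓ` (type `G₂⁽¹⁾`). -/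
theorem Sset_bijOn_Tset (ℓ : ℤ) (hℓ : 1 ≤ ℓ) :
    Set.BijOn (fun p : ℤ × ℤ × ℤ × ℤ =>
      (-3 * p.2.1 + p.2.2.1, p.1 + p.2.1 - p.2.2.1 + p.2.2.2, -p.1 + p.2.1, p.1))
      (Sset ℓ) (Tset ℓ) := by
  refine ⟨fun p hp => ?_, fun p hp q hq h => ?_, fun r hr => ?_⟩
  · obtain ⟨h1, h2, h3, h4, h5, h6, h7, h8⟩ := hp
    show _ ∧ _ ∧ _ ∧ _ ∧ _ ∧ _
    dsimp only
    refine ⟨by omega, by omega, by omega, by omega, by omega, by omega⟩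
  · obtain ⟨a, b, c, d⟩ := p
    obtain ⟨a', b', c', d'⟩ := q
    simp only [Prod.mk.injEq] at h
    simp only [Prod.mk.injEq]
    omega
  · obtain ⟨r1, r2, r3, r4⟩ := r
    obtain ⟨h1, h2, h3, h4, h5, h6⟩ := hr
    dsimp only at h1 h2 h3 h4 h5 h6
    refine ⟨(r4, r3 + r4, r1 + 3 * r3 + 3 * r4, r1 + r2 + 2 * r3 + r4), ?_, ?_⟩
    · show _ ∧ _ ∧ _ ∧ _ ∧ _ ∧ _ ∧ _ ∧ _
      dsimp only
      refine ⟨by omega, by omega, by omega, by omega, by omega, by omega, by omega, by omega⟩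
    · dsimp only; simp only [Prod.mk.injEq]; exact ⟨by ring, by ring, by ring, trivial⟩
end

section
/- Consider the 7-dimensional ℚ(q)-vector space W with basis {1,2,3,0,3̄,2̄,1̄} carrying the action e₁: 3↦2, 2̄↦3̄ (else 0); e₂: 2↦1, 0↦[2]_q·3, 3̄↦0, 1̄↦2̄ (else 0); f₁, f₂ given by the transposed rules (f₂·0 = [2]_q·3̄, f₂·3 = 0, f₂·1 = 2, f₂·2̄ = 1̄; f₁·2 = 3, f₁·3̄ = 2̄). Then with the symmetric bilinear form making the basis orthogonal with ‖j‖² = 1 for j ≠ 0 and ‖0‖² = 1 + q², the form satisfies the prepolarization conditions (e_i u, v) = (u, q_i^{-1} t_i^{-1} f_i v) for i = 1, 2 (with q₁ = q³, q₂ = q and the weights wt(1) = ϖ₂, wt(2) = ϖ₁-ϖ₂, wt(3) = -ϖ₁+2ϖ₂, wt(0) = 0, wt(j̄) = -wt(j)). -/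
noncomputable section

abbrev K : Type := RatFunc ℚ

def qq : K := RatFunc.X

/-- `x` is a rational function without pole at `q = 0`. -/
def RegA (x : K) : Prop :=
  ∃ f g : Polynomial ℚ, Polynomial.eval 0 g ≠ 0 ∧
    x = algebraMap (Polynomial ℚ) K f / algebraMap (Polynomial ℚ) K g

/-- quantum integer `[n]_q` for `n : ℤ`. -/
def qint (n : ℤ) : K := (qq ^ n - qq ^ (-n)) / (qq - qq⁻¹)

/-- quantum factorial `[k]_q!`. -/
def qfac (k : ℕ) : K := ∏ j ∈ Finset.range k, qint ((j : ℤ) + 1)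

/-- Gaussian binomial coefficient `[m choose k]_q`, `m : ℤ`, `k : ℕ`. -/
def qbinom (m : ℤ) (k : ℕ) : K := (∏ j ∈ Finset.range k, qint (m - (j : ℤ))) / qfac k

/-- `[2]_q = q + q⁻¹`. -/
def tw : K := qq + qq⁻¹

/-- The 7-dimensional fundamental representation `W(ϖ₂)` of type `G₂⁽¹⁾`, with basis
ordered as `1, 2, 3, 0, 3̄, 2̄, 1̄` (indices `0,…,6`). -/
abbrev W : Type := Fin 7 → K

/-- `e₁ : 3 ↦ 2, 2̄ ↦ 3̄`. -/
def e1 (u : W) : W := ![0, u 2, 0, 0, u 5, 0, 0]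

/-- `e₂ : 2 ↦ 1, 0 ↦ [2]_q·3, 3̄ ↦ 0, 1̄ ↦ 2̄`. -/
def e2 (u : W) : W := ![u 1, 0, tw * u 3, u 4, 0, u 6, 0]

/-- `f₁ : 2 ↦ 3, 3̄ ↦ 2̄`. -/
def f1 (u : W) : W := ![0, 0, u 1, 0, 0, u 4, 0]

/-- `f₂ : 1 ↦ 2, 3 ↦ 0, 0 ↦ [2]_q·3̄, 2̄ ↦ 1̄`. -/
def f2 (u : W) : W := ![0, u 0, 0, u 2, tw * u 3, 0, u 5]

/-- `t₁⁻¹`, acting on a weight vector of weight `λ` by `q₁^{-⟨h₁,λ⟩}` with `q₁ = q³`. -/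
def t1inv (u : W) : W :=
  fun i => ![1, qq ^ (-3 : ℤ), qq ^ (3 : ℤ), 1, qq ^ (-3 : ℤ), qq ^ (3 : ℤ), 1] i * u i

/-- `t₂⁻¹`, acting on a weight vector of weight `λ` by `q₂^{-⟨h₂,λ⟩}` with `q₂ = q`. -/
def t2inv (u : W) : W :=
  fun i => ![qq ^ (-1 : ℤ), qq, qq ^ (-2 : ℤ), 1, qq ^ (2 : ℤ), qq ^ (-1 : ℤ), qq] i * u i

/-- The symmetric bilinear form making the basis orthogonal, with `‖j‖² = 1` for `j ≠ 0`
and `‖0‖² = 1 + q²`. -/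
def Bform (u v : W) : K := ∑ i, ![1, 1, 1, 1 + qq ^ 2, 1, 1, 1] i * u i * v i

lemma qq_ne_zero : qq ≠ 0 := RatFunc.X_ne_zero

lemma qq_mul_tw : qq * tw = 1 + qq ^ 2 := by
  rw [tw, mul_add, mul_inv_cancel₀ qq_ne_zero]
  ring

lemma Bform_e1_left (u v : W) : Bform (e1 u) v = u 2 * v 1 + u 5 * v 4 := by
  simp [Bform, e1, Fin.sum_univ_seven]

lemma Bform_t1inv_f1_right (u v : W) :
    Bform u (t1inv (f1 v)) = qq ^ (3 : ℤ) * (u 2 * v 1 + u 5 * v 4) := by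
  simp only [Bform, t1inv, f1, Fin.sum_univ_seven, Matrix.cons_val, Matrix.cons_val_zero,
    Matrix.cons_val_one, zpow_ofNat, mul_zero, one_mul, zero_add, add_zero]
  ring

lemma Bform_e2_left (u v : W) :
    Bform (e2 u) v = u 1 * v 0 + tw * u 3 * v 2 + (1 + qq ^ 2) * u 4 * v 3 + u 6 * v 5 := by
  simp [Bform, e2, Fin.sum_univ_seven]

-- Both terms passing through the vector `0` match because `‖0‖² = 1 + q² = q [2]_q`.
lemma Bform_t2inv_f2_right (u v : W) :
    Bform u (t2inv (f2 v)) =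
      qq * (u 1 * v 0 + tw * u 3 * v 2 + (1 + qq ^ 2) * u 4 * v 3 + u 6 * v 5) := by
  simp only [Bform, t2inv, f2, Fin.sum_univ_seven, Matrix.cons_val, Matrix.cons_val_zero,
    Matrix.cons_val_one, zpow_ofNat, mul_zero, one_mul, zero_add, add_zero]
  linear_combination (u 4 * v 3 * qq - u 3 * v 2) * qq_mul_tw

/-- The form on the `G₂⁽¹⁾` fundamental representation `W(ϖ₂)` satisfies the
prepolarization conditions `(e_i u, v) = (u, q_i⁻¹ t_i⁻¹ f_i v)` for `i = 1, 2`,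
with `q₁ = q³`, `q₂ = q`. -/
theorem Bform_prepolarization :
    (∀ u v : W, Bform (e1 u) v = qq ^ (-3 : ℤ) * Bform u (t1inv (f1 v))) ∧
    (∀ u v : W, Bform (e2 u) v = qq ^ (-1 : ℤ) * Bform u (t2inv (f2 v))) := by
  constructor <;> intro u v
  · rw [Bform_e1_left, Bform_t1inv_f1_right, ← mul_assoc, ← zpow_add₀ qq_ne_zero]
    simp
  · rw [Bform_e2_left, Bform_t2inv_f2_right, ← mul_assoc, zpow_neg_one,
      inv_mul_cancel₀ qq_ne_zero, one_mul]
end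
end

section
/- Let V be a finite-dimensional module over U_q(sl₂) with a polarization (positive-definite contravariant symmetric form with respect to the total order on ℚ(q) given by the q-adic leading coefficient). If u is a highest weight vector of weight λ ≥ 0 (e u = 0, t u = q^λ u) with ‖u‖² = 1, then ‖f^(k) u‖² = q^{k(λ-k)}[λ choose k]_q for all 0 ≤ k ≤ λ, and hence ‖f^(k) u‖² ∈ 1 + qA. -/
/-! The vectors `F^m u` are weight vectors of weight `λ - 2m`, and `[E, F] = (T - T⁻¹)/(q - q⁻¹)`
gives `E F^{m+1} u = [m+1][λ-m] F^m u`. Contravariance then yields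
`‖F^{m+1} u‖² = q^{λ-2m-1} [m+1][λ-m] ‖F^m u‖²`, and dividing by `[k]!²` leaves
`q^{k(λ-k)} [λ choose k] = ∏_{j<k} (1 - q^{2(λ-j)}) / (1 - q^{2(j+1)})`: a quotient of polynomials
that both have constant term `1`, hence an element of `1 + qA`. -/

noncomputable section

/-- Positivity in `ℚ(q)`: `x ∈ ⊔_{n} {qⁿ(c + qA) : c ∈ ℚ_{>0}}`. -/
def PosQ (x : K) : Prop :=
  ∃ (n : ℤ) (c : ℚ) (a : K), 0 < c ∧ RegA a ∧ x = qq ^ n * ((c : K) + qq * a)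

lemma qq_eq_algebraMap_X : qq = algebraMap (Polynomial ℚ) K Polynomial.X :=
  (RatFunc.algebraMap_X).symm

lemma one_sub_qq_pow_eq_algebraMap (m : ℕ) :
    1 - qq ^ m = algebraMap (Polynomial ℚ) K (1 - Polynomial.X ^ m) := by
  rw [map_sub, map_one, map_pow, qq_eq_algebraMap_X]

lemma one_sub_qq_pow_ne_zero {m : ℕ} (hm : m ≠ 0) : 1 - qq ^ m ≠ 0 := by
  rw [one_sub_qq_pow_eq_algebraMap, Ne, map_eq_zero_iff _ (IsFractionRing.injective _ _)]
  intro h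
  simpa [hm] using congrArg (Polynomial.eval 0) h

lemma qq_sub_qq_inv_ne_zero : qq - qq⁻¹ ≠ 0 := by
  intro h
  apply one_sub_qq_pow_ne_zero two_ne_zero
  field_simp [qq_ne_zero] at h
  linear_combination -h

lemma qint_natCast (n : ℕ) :
    qint n = qq ^ (1 - (n : ℤ)) * ((1 - qq ^ (2 * n)) / (1 - qq ^ 2)) := by
  have h2 := one_sub_qq_pow_ne_zero two_ne_zero
  have hd := qq_sub_qq_inv_ne_zero
  have := qq_ne_zero
  rw [qint, div_eq_iff hd, mul_div_assoc', div_mul_eq_mul_div, eq_div_iff h2,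
    zpow_sub₀ qq_ne_zero, zpow_neg, zpow_natCast, zpow_one, pow_mul]
  field_simp
  ring

lemma qint_one : qint 1 = 1 := by
  simp [qint, qq_sub_qq_inv_ne_zero]

lemma qint_natCast_ne_zero {n : ℕ} (hn : n ≠ 0) : qint n ≠ 0 := by
  rw [qint_natCast]
  exact mul_ne_zero (zpow_ne_zero _ qq_ne_zero) <|
    div_ne_zero (one_sub_qq_pow_ne_zero (by positivity)) (one_sub_qq_pow_ne_zero two_ne_zero)

lemma qfac_ne_zero (k : ℕ) : qfac k ≠ 0 :=
  Finset.prod_ne_zero_iff.mpr fun j _ => by exact_mod_cast qint_natCast_ne_zero j.succ_ne_zero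

lemma qint_mul_qint_add_one_add_qint_sub (a b : ℤ) :
    qint a * qint (b + 1) + qint (b - a) = qint (a + 1) * qint b := by
  have := qq_sub_qq_inv_ne_zero
  have := qq_ne_zero
  simp only [qint, zpow_add₀ qq_ne_zero, zpow_sub₀ qq_ne_zero, zpow_neg, zpow_one, neg_add]
  field_simp
  ring

lemma prod_zpow_eq_zpow_sum {ι G₀ : Type*} [CommGroupWithZero G₀] {a : G₀} (ha : a ≠ 0)
    (s : Finset ι) (e : ι → ℤ) : ∏ i ∈ s, a ^ e i = a ^ ∑ i ∈ s, e i := by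
  classical
  induction s using Finset.induction_on with
  | empty => simp
  | insert i s hi ih => rw [Finset.prod_insert hi, Finset.sum_insert hi, ih, zpow_add₀ ha]

lemma sum_range_sub_two_mul_sub_one (lam : ℤ) (k : ℕ) :
    ∑ j ∈ Finset.range k, (lam - 2 * j - 1) = k * (lam - k) := by
  induction k with
  | zero => simp
  | succ k ih => rw [Finset.sum_range_succ, ih]; push_cast; ring

lemma qq_zpow_mul_qbinom_eq_prod (lam : ℤ) (k : ℕ) :
    qq ^ ((k : ℤ) * (lam - k)) * qbinom lam k =
      ∏ j ∈ Finset.range k, qq ^ (lam - 2 * j - 1) * (qint (lam - j) / qint (j + 1)) := by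
  rw [Finset.prod_mul_distrib, Finset.prod_div_distrib, prod_zpow_eq_zpow_sum qq_ne_zero,
    sum_range_sub_two_mul_sub_one, ← qfac, qbinom]

lemma prod_qq_zpow_mul_qint_mul_qint (lam : ℤ) (k : ℕ) :
    ∏ j ∈ Finset.range k, qq ^ (lam - 2 * j - 1) * (qint (j + 1) * qint (lam - j)) =
      qfac k ^ 2 * (qq ^ ((k : ℤ) * (lam - k)) * qbinom lam k) := by
  have hfactor : ∀ j : ℕ, qq ^ (lam - 2 * j - 1) * (qint (j + 1) * qint (lam - j)) =
      qint (j + 1) ^ 2 * (qq ^ (lam - 2 * j - 1) * (qint (lam - j) / qint (j + 1))) := by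
    intro j
    have : qint (j + 1) ≠ 0 := by exact_mod_cast qint_natCast_ne_zero j.succ_ne_zero
    field_simp
  simp only [hfactor, Finset.prod_mul_distrib, Finset.prod_pow, qq_zpow_mul_qbinom_eq_prod, qfac]

lemma qq_zpow_mul_qint_div_qint {N j : ℕ} (hj : j < N) :
    qq ^ ((N : ℤ) - 2 * j - 1) * (qint (N - j) / qint (j + 1)) =
      (1 - qq ^ (2 * (N - j))) / (1 - qq ^ (2 * (j + 1))) := by
  have := qq_ne_zero
  have h2 := one_sub_qq_pow_ne_zero two_ne_zero
  have hj1 := one_sub_qq_pow_ne_zero (Nat.mul_ne_zero two_ne_zero j.succ_ne_zero)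
  have hexp : (N : ℤ) - 2 * j - 1 + (1 - ((N - j : ℕ) : ℤ)) = 1 - ((j + 1 : ℕ) : ℤ) := by omega
  rw [← Nat.cast_sub hj.le, ← Nat.cast_succ, qint_natCast, qint_natCast, ← hexp,
    zpow_add₀ qq_ne_zero]
  field_simp

lemma exists_regA_of_eval_zero_eq {f g : Polynomial ℚ} (hfg : f.eval 0 = g.eval 0)
    (hg : g.eval 0 ≠ 0) :
    ∃ a : K, RegA a ∧
      algebraMap (Polynomial ℚ) K f / algebraMap (Polynomial ℚ) K g = 1 + qq * a := by
  obtain ⟨p, hp⟩ : Polynomial.X ∣ f - g := by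
    rw [Polynomial.X_dvd_iff, Polynomial.coeff_zero_eq_eval_zero, Polynomial.eval_sub, hfg,
      sub_self]
  have hg' : algebraMap (Polynomial ℚ) K g ≠ 0 := by
    rw [Ne, map_eq_zero_iff _ (IsFractionRing.injective _ _)]
    rintro rfl
    exact hg Polynomial.eval_zero
  refine ⟨_, ⟨p, g, hg, rfl⟩, ?_⟩
  rw [sub_eq_iff_eq_add'.mp hp, map_add, map_mul, ← qq_eq_algebraMap_X]
  field_simp

lemma eval_zero_prod_one_sub_X_pow {s : Finset ℕ} {n : ℕ → ℕ} (hn : ∀ j ∈ s, n j ≠ 0) :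
    (∏ j ∈ s, (1 - Polynomial.X ^ n j : Polynomial ℚ)).eval 0 = 1 := by
  rw [Polynomial.eval_prod]
  exact Finset.prod_eq_one fun j hj => by simp [hn j hj]

lemma exists_regA_qq_zpow_mul_qbinom {N k : ℕ} (hk : k ≤ N) :
    ∃ a : K, RegA a ∧ qq ^ ((k : ℤ) * (N - k)) * qbinom N k = 1 + qq * a := by
  have hratio : qq ^ ((k : ℤ) * (N - k)) * qbinom N k =
      algebraMap (Polynomial ℚ) K (∏ j ∈ Finset.range k, (1 - Polynomial.X ^ (2 * (N - j)))) /
        algebraMap (Polynomial ℚ) K (∏ j ∈ Finset.range k, (1 - Polynomial.X ^ (2 * (j + 1)))) := by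
    simp only [map_prod, ← one_sub_qq_pow_eq_algebraMap, ← Finset.prod_div_distrib]
    rw [qq_zpow_mul_qbinom_eq_prod]
    refine Finset.prod_congr rfl fun j hj => ?_
    exact qq_zpow_mul_qint_div_qint ((Finset.mem_range.mp hj).trans_le hk)
  have hf := eval_zero_prod_one_sub_X_pow (s := Finset.range k) (n := fun j => 2 * (N - j))
    fun j hj => by have := Finset.mem_range.mp hj; omega
  have hg := eval_zero_prod_one_sub_X_pow (s := Finset.range k) (n := fun j => 2 * (j + 1))
    fun j _ => by omega
  rw [hratio]
  exact exists_regA_of_eval_zero_eq (hf.trans hg.symm) (hg ▸ one_ne_zero)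

section HighestWeight

variable {M : Type*} [AddCommGroup M] [Module K M] {E F T Tinv : Module.End K M}

lemma Tinv_apply_of_T_apply (ht' : Tinv * T = 1) {v : M} {n : ℤ}
    (hv : T v = qq ^ n • v) : Tinv v = qq ^ (-n) • v := by
  have h := congr($ht' v)
  rw [Module.End.mul_apply, hv, map_smul, Module.End.one_apply] at h
  rw [← smul_right_inj (zpow_ne_zero n qq_ne_zero), h, smul_smul, ← zpow_add₀ qq_ne_zero,
    add_neg_cancel, zpow_zero, one_smul]

lemma T_F_apply (htf : T * F = (qq ^ (-2 : ℤ)) • (F * T)) {v : M} {n : ℤ}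
    (hv : T v = qq ^ n • v) : T (F v) = qq ^ (n - 2) • F v := by
  rw [← Module.End.mul_apply, htf, LinearMap.smul_apply, Module.End.mul_apply, hv, map_smul,
    smul_smul, ← zpow_add₀ qq_ne_zero, neg_add_eq_sub]

lemma E_F_apply (ht' : Tinv * T = 1) (hef : E * F - F * E = (qq - qq⁻¹)⁻¹ • (T - Tinv))
    {v : M} {n : ℤ} (hv : T v = qq ^ n • v) : E (F v) = F (E v) + qint n • v := by
  have h := congr($hef v)
  rw [LinearMap.sub_apply, LinearMap.smul_apply, LinearMap.sub_apply, Module.End.mul_apply,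
    Module.End.mul_apply, hv, Tinv_apply_of_T_apply ht' hv, ← sub_smul, smul_smul,
    inv_mul_eq_div, ← qint, sub_eq_iff_eq_add'] at h
  exact h

variable {lam : ℤ} {u : M}

lemma F_pow_succ_apply (m : ℕ) : (F ^ (m + 1)) u = F ((F ^ m) u) := by
  rw [pow_succ', Module.End.mul_apply]

lemma T_F_pow_apply (htf : T * F = (qq ^ (-2 : ℤ)) • (F * T)) (hu : T u = qq ^ lam • u)
    (m : ℕ) : T ((F ^ m) u) = qq ^ (lam - 2 * m) • (F ^ m) u := by
  induction m with
  | zero => simpa using hu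
  | succ m ih =>
    rw [F_pow_succ_apply, T_F_apply htf ih]
    congr 2
    push_cast
    ring

lemma E_F_pow_succ_apply (ht' : Tinv * T = 1) (htf : T * F = (qq ^ (-2 : ℤ)) • (F * T))
    (hef : E * F - F * E = (qq - qq⁻¹)⁻¹ • (T - Tinv)) (hu : T u = qq ^ lam • u) (heu : E u = 0)
    (m : ℕ) : E ((F ^ (m + 1)) u) = (qint (m + 1) * qint (lam - m)) • (F ^ m) u := by
  induction m with
  | zero => simp [E_F_apply ht' hef hu, heu, qint_one]
  | succ m ih =>
    rw [F_pow_succ_apply, E_F_apply ht' hef (T_F_pow_apply htf hu _), ih, map_smul,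
      ← F_pow_succ_apply, ← add_smul]
    congr 1
    push_cast
    convert qint_mul_qint_add_one_add_qint_sub (m + 1) (lam - m - 1) using 2 <;> ring_nf

lemma B_F_pow_apply_self (ht' : Tinv * T = 1) (htf : T * F = (qq ^ (-2 : ℤ)) • (F * T))
    (hef : E * F - F * E = (qq - qq⁻¹)⁻¹ • (T - Tinv)) (B : M →ₗ[K] M →ₗ[K] K)
    (hBf : ∀ u v : M, B (F u) v = qq⁻¹ * B u (T (E v))) (hu : T u = qq ^ lam • u)
    (heu : E u = 0) (m : ℕ) :
    B ((F ^ m) u) ((F ^ m) u) =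
      (∏ j ∈ Finset.range m, qq ^ (lam - 2 * j - 1) * (qint (j + 1) * qint (lam - j))) * B u u := by
  induction m with
  | zero => simp
  | succ m ih =>
    conv_lhs => arg 1; rw [F_pow_succ_apply]
    rw [hBf, E_F_pow_succ_apply ht' htf hef hu heu, map_smul, T_F_pow_apply htf hu, map_smul,
      map_smul, smul_eq_mul, smul_eq_mul, ih, Finset.prod_range_succ,
      sub_eq_add_neg (lam - 2 * (m : ℤ)) 1, zpow_add₀ qq_ne_zero, zpow_neg_one]
    ring

lemma B_qfac_inv_smul_F_pow_apply_self (ht' : Tinv * T = 1)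
    (htf : T * F = (qq ^ (-2 : ℤ)) • (F * T))
    (hef : E * F - F * E = (qq - qq⁻¹)⁻¹ • (T - Tinv)) (B : M →ₗ[K] M →ₗ[K] K)
    (hBf : ∀ u v : M, B (F u) v = qq⁻¹ * B u (T (E v))) (hu : T u = qq ^ lam • u)
    (heu : E u = 0) (k : ℕ) :
    B (((qfac k)⁻¹ • F ^ k) u) (((qfac k)⁻¹ • F ^ k) u) =
      qq ^ ((k : ℤ) * (lam - k)) * qbinom lam k * B u u := by
  have := qfac_ne_zero k
  rw [LinearMap.smul_apply, map_smul, map_smul, LinearMap.smul_apply,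
    B_F_pow_apply_self ht' htf hef B hBf hu heu, prod_qq_zpow_mul_qint_mul_qint, smul_eq_mul,
    smul_eq_mul]
  field_simp

end HighestWeight

theorem norm_divided_power_f_general
    (M : Type*) [AddCommGroup M] [Module K M]
    (E F T Tinv : Module.End K M)
    (ht' : Tinv * T = 1)
    (htf : T * F = (qq ^ (-2 : ℤ)) • (F * T))
    (hef : E * F - F * E = (qq - qq⁻¹)⁻¹ • (T - Tinv))
    (B : M →ₗ[K] M →ₗ[K] K)
    (hBf : ∀ u v : M, B (F u) v = qq⁻¹ * B u (T (E v)))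
    (lam : ℤ) (u : M)
    (hu : T u = (qq ^ lam) • u) (heu : E u = 0) (hnorm : B u u = 1)
    (k : ℕ) (hk : (k : ℤ) ≤ lam) :
    B (((qfac k)⁻¹ • F ^ k) u) (((qfac k)⁻¹ • F ^ k) u)
        = qq ^ ((k : ℤ) * (lam - (k : ℤ))) * qbinom lam k
    ∧ ∃ a : K, RegA a ∧
        B (((qfac k)⁻¹ • F ^ k) u) (((qfac k)⁻¹ • F ^ k) u) = 1 + qq * a := by
  have hdiv := B_qfac_inv_smul_F_pow_apply_self ht' htf hef B hBf hu heu k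
  rw [hnorm, mul_one] at hdiv
  refine ⟨hdiv, ?_⟩
  obtain ⟨N, rfl⟩ : ∃ N : ℕ, lam = N := ⟨lam.toNat, by omega⟩
  rw [hdiv]
  exact exists_regA_qq_zpow_mul_qbinom (by exact_mod_cast hk)

/-- Dual of Lemma 3.4: for a `U_q(sl₂)`-module with a polarization and a highest weight
vector `u` of weight `λ ≥ 0` with `‖u‖² = 1`:
`‖f^(k) u‖² = q^{k(λ-k)} [λ choose k]_q` for `0 ≤ k ≤ λ`, hence `‖f^(k) u‖² ∈ 1 + qA`. -/
theorem norm_divided_power_f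
    (M : Type*) [AddCommGroup M] [Module K M] [FiniteDimensional K M]
    (E F T Tinv : Module.End K M)
    (ht : T * Tinv = 1) (ht' : Tinv * T = 1)
    (hte : T * E = (qq ^ 2) • (E * T))
    (htf : T * F = (qq ^ (-2 : ℤ)) • (F * T))
    (hef : E * F - F * E = (qq - qq⁻¹)⁻¹ • (T - Tinv))
    (B : M →ₗ[K] M →ₗ[K] K)
    (hsymm : ∀ u v : M, B u v = B v u)
    (hBe : ∀ u v : M, B (E u) v = qq⁻¹ * B u (Tinv (F v)))
    (hBf : ∀ u v : M, B (F u) v = qq⁻¹ * B u (T (E v)))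
    (hpos : ∀ u : M, u ≠ 0 → PosQ (B u u))
    (lam : ℤ) (hlam : 0 ≤ lam) (u : M)
    (hu : T u = (qq ^ lam) • u) (heu : E u = 0) (hnorm : B u u = 1)
    (k : ℕ) (hk : (k : ℤ) ≤ lam) :
    B (((qfac k)⁻¹ • F ^ k) u) (((qfac k)⁻¹ • F ^ k) u)
        = qq ^ ((k : ℤ) * (lam - (k : ℤ))) * qbinom lam k
    ∧ ∃ a : K, RegA a ∧
        B (((qfac k)⁻¹ • F ^ k) u) (((qfac k)⁻¹ • F ^ k) u) = 1 + qq * a :=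
  norm_divided_power_f_general M E F T Tinv ht' htf hef B hBf lam u hu heu hnorm k hk
end
end
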